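/- Let $\{X_k\}_{k=1}^n$ be independent random variables in a sub-linear expectation space $(\Omega, \mathcal{H}, \mathbb{E})$ with $\mathbb{E}[X_k^2] < \infty$ for all $k$, and let $\underline{v}$ be the lower capacity ($\underline{v}(A) = 1 - \mathbb{V}(A^c)$, where $\mathbb{V}$ satisfies the sandwich property with respect to $\mathbb{E}$). Then for any constants $\mu_k$ with $\hat{\varepsilon}[X_k] := -\mathbb{E}[-X_k] \le \mu_k \le \mathbb{E}[X_k]$ and any $x > 0$: $\underline{v}\Big(\max_{k \le n} \big|\sum_{i=1}^{k}(X_i - \mu_i)\big| \ge x\Big) \le \frac{2}{x^2} \sum_{i=1}^{n} \mathbb{E}[X_i^2]$. -/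

import Mathlib

/-!
Fix `0 < x' < x`, write `T_m` for the centred partial sums, `M_m` for their running maximum,
`r(t) = min(|t|, x)²` and `θ` for the piecewise linear cutoff which is `1` below `x'` and `0`
above `x`. The discrete integral `G_n = ∑_{k<n} θ(M_k) (r(T_{k+1}) - r(T_k))` is nonnegative and
at least `x'²` on the event `B = {M_n ≥ x}`, so `1 - G_n / x'²` lies below the indicator of `Bᶜ`
and the sandwich property gives `1 - V(Bᶜ) ≤ -E[-G_n] / x'²`.

Since `G_n` is a bounded Lipschitz function of `X_0, …, X_{n-1}`, independence lets one integrate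
out `X_m` with the past frozen. There `θ(M_m) > 0` forces `|T_m| < x`, so `r(T_m) = T_m²`, and
`E[-(t + X_m - μ_m)²] ≥ -t² - E[X_m²]` as soon as `μ_m` lies between the lower and upper means
of `X_m`. Hence `E[-G_n] ≥ -∑ E[X_i²]`, and `x' = x / √2` gives the constant `2 / x²`. The cutoff
`θ`, rather than the indicator of `{M_k < x}`, is what makes the test functions Lipschitz, as
Peng's independence requires.
-/

open Filter MeasureTheory

noncomputable section

/-- The class `C_{l,Lip}` of local Lipschitz functions with polynomial growth. -/
def ClLip {n : ℕ} (φ : (Fin n → ℝ) → ℝ) : Prop :=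
  ∃ C : ℝ, 0 < C ∧ ∃ m : ℕ, ∀ x y : Fin n → ℝ,
    |φ x - φ y| ≤ C * (1 + ‖x‖ ^ m + ‖y‖ ^ m) * ‖x - y‖

/-- A sub-linear expectation space `(Ω, H, E)` in the sense of Peng. -/
structure SLE (Ω : Type*) where
  H : Set (Ω → ℝ)
  E : (Ω → ℝ) → ℝ
  const_mem : ∀ c : ℝ, (fun _ => c) ∈ H
  comp_mem : ∀ (n : ℕ) (φ : (Fin n → ℝ) → ℝ), ClLip φ →
    ∀ X : Fin n → Ω → ℝ, (∀ i, X i ∈ H) → (fun ω => φ (fun i => X i ω)) ∈ H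
  mono : ∀ X Y, X ∈ H → Y ∈ H → (∀ ω, X ω ≤ Y ω) → E X ≤ E Y
  isConst : ∀ c : ℝ, E (fun _ => c) = c
  subadd : ∀ X Y, X ∈ H → Y ∈ H → E (fun ω => X ω + Y ω) ≤ E X + E Y
  poshom : ∀ c : ℝ, 0 < c → ∀ X, X ∈ H → E (fun ω => c * X ω) = c * E X

variable {Ω : Type*}

/-- The conjugate (lower) expectation. -/
def SLE.eps (S : SLE Ω) (X : Ω → ℝ) : ℝ := -S.E (fun ω => -X ω)

/-- `Y` (a `q`-vector) is independent of `X` (a `p`-vector) in Peng's sense. -/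
def IndepVec (S : SLE Ω) {p q : ℕ} (X : Fin p → Ω → ℝ) (Y : Fin q → Ω → ℝ) : Prop :=
  ∀ φ : (Fin p → ℝ) → (Fin q → ℝ) → ℝ,
    (∃ K : NNReal, LipschitzWith K (Function.uncurry φ)) →
    (∃ M : ℝ, ∀ x y, |φ x y| ≤ M) →
    S.E (fun ω => φ (fun i => X i ω) (fun j => Y j ω)) =
      S.E (fun ω => S.E (fun ω' => φ (fun i => X i ω) (fun j => Y j ω')))

/-- A sequence is independent if `X_{i+1}` is independent of `(X_0, …, X_i)`. -/
def IndepSeq (S : SLE Ω) (X : ℕ → Ω → ℝ) : Prop :=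
  ∀ i : ℕ, IndepVec S (fun j : Fin (i + 1) => X j.val) (fun _ : Fin 1 => X (i + 1))

/-- The upper capacity `V̂` generated by the sub-linear expectation. -/
def hatV (S : SLE Ω) (A : Set Ω) : ℝ :=
  sInf {r | ∃ ξ ∈ S.H, (∀ ω, Set.indicator A (fun _ => (1 : ℝ)) ω ≤ ξ ω) ∧ S.E ξ = r}

/-- The countably sub-additive extension `V*` of `V̂`. -/
def Vstar (S : SLE Ω) (A : Set Ω) : ℝ :=
  sInf {r | ∃ B : ℕ → Set Ω, (A ⊆ ⋃ n, B n) ∧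
    Summable (fun n => hatV S (B n)) ∧ r = ∑' n, hatV S (B n)}

/-- Truncation `X^{(c)} = (-c) ∨ X ∧ c`. -/
def trunc (c : ℝ) (X : Ω → ℝ) : Ω → ℝ := fun ω => max (-c) (min (X ω) c)

/-- Membership in `H₁ = {X ∈ H : lim_{c,d→∞} E[(|X| ∧ d - c)⁺] = 0}`. -/
def memH1 (S : SLE Ω) (X : Ω → ℝ) : Prop :=
  X ∈ S.H ∧
    Tendsto (fun cd : ℝ × ℝ => S.E (fun ω => max (min |X ω| cd.2 - cd.1) 0))
      (atTop ×ˢ atTop) (nhds 0)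

/-- Two real random variables are identically distributed (Peng's sense). -/
def IdentDist1 (S : SLE Ω) (A B : Ω → ℝ) : Prop :=
  ∀ φ : ℝ → ℝ, (∃ K : NNReal, LipschitzWith K φ) → (∃ M : ℝ, ∀ x, |φ x| ≤ M) →
    S.E (fun ω => φ (A ω)) = S.E (fun ω => φ (B ω))

/-- `m`-dependence: `(X_{n+m+1}, …, X_{n+j})` is independent of `(X_1, …, X_n)`
(indices here are 0-based: `X 0` plays the role of `X_1`). -/
def MDep (S : SLE Ω) (m : ℕ) (X : ℕ → Ω → ℝ) : Prop :=
  ∀ n : ℕ, 1 ≤ n → ∀ j : ℕ, m + 1 ≤ j →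
    IndepVec S (fun i : Fin n => X i.val) (fun i : Fin (j - m) => X (n + m + i.val))

/-- Linear stationarity: `X_1 + ⋯ + X_n ≐ X_{1+p} + ⋯ + X_{n+p}`. -/
def LinStat (S : SLE Ω) (X : ℕ → Ω → ℝ) : Prop :=
  ∀ n : ℕ, 1 ≤ n → ∀ p : ℕ,
    IdentDist1 S (fun ω => ∑ i ∈ Finset.range n, X i ω)
      (fun ω => ∑ i ∈ Finset.range n, X (p + i) ω)

/-- Condition (CC): `E` is represented by a countable-dimensionally weakly
compact family `P` of probability measures. -/
def CC [MeasurableSpace Ω] (S : SLE Ω) (P : Set (Measure Ω)) : Prop :=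
  P.Nonempty ∧ (∀ p ∈ P, IsProbabilityMeasure p) ∧
  (∀ X ∈ S.H, (∃ M : ℝ, ∀ ω, |X ω| ≤ M) → S.E X = ⨆ p ∈ P, ∫ ω, X ω ∂p) ∧
  (∀ Y : ℕ → Ω → ℝ, (∀ n, Y n ∈ S.H ∧ ∃ M : ℝ, ∀ ω, |Y n ω| ≤ M) →
    ∀ p : ℕ → Measure Ω, (∀ n, p n ∈ P) →
      ∃ k : ℕ → ℕ, StrictMono k ∧ ∃ Q ∈ P,
        ∀ (d : ℕ) (φ : (Fin d → ℝ) → ℝ),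
          (∃ K : NNReal, LipschitzWith K φ) → (∃ M : ℝ, ∀ x, |φ x| ≤ M) →
          Tendsto (fun j => ∫ ω, φ (fun i : Fin d => Y i.val ω) ∂(p (k j))) atTop
            (nhds (∫ ω, φ (fun i : Fin d => Y i.val ω) ∂Q)))

open Finset

def capSq (x t : ℝ) : ℝ := min |t| x ^ 2

section capSq

variable {x x' t u v : ℝ}

lemma capSq_le_sq (hx : 0 ≤ x) : capSq x t ≤ t ^ 2 := by
  rw [capSq, ← sq_abs t]
  exact pow_le_pow_left₀ (le_min (abs_nonneg t) hx) (min_le_left _ _) 2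

lemma capSq_of_abs_le (h : |t| ≤ x) : capSq x t = t ^ 2 := by
  rw [capSq, min_eq_left h, sq_abs]

lemma capSq_of_le_abs (h : x ≤ |t|) : capSq x t = x ^ 2 := by
  rw [capSq, min_eq_right h]

lemma sq_le_capSq (hx' : 0 ≤ x') (hx : x' ≤ x) (ht : x' ≤ |t|) : x' ^ 2 ≤ capSq x t :=
  pow_le_pow_left₀ hx' (le_min ht hx) 2

lemma abs_capSq_sub_le (hx : 0 ≤ x) : |capSq x u - capSq x v| ≤ 2 * x * |u - v| := by
  have hu : 0 ≤ min |u| x := le_min (abs_nonneg u) hx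
  have hv : 0 ≤ min |v| x := le_min (abs_nonneg v) hx
  have hdiff : |min |u| x - min |v| x| ≤ |u - v| :=
    (abs_min_sub_min_le_max _ _ _ _).trans
      (max_le (abs_abs_sub_abs_le_abs_sub u v) (by simp))
  rw [capSq, capSq, sq_sub_sq, abs_mul, abs_of_nonneg (add_nonneg hu hv)]
  exact mul_le_mul (by linarith [min_le_right |u| x, min_le_right |v| x]) hdiff
    (abs_nonneg _) (by positivity)

lemma abs_capSq_sub_le_sq (hx : 0 ≤ x) : |capSq x u - capSq x v| ≤ x ^ 2 := by
  have hle : ∀ t, 0 ≤ capSq x t ∧ capSq x t ≤ x ^ 2 := fun t =>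
    ⟨sq_nonneg _, pow_le_pow_left₀ (le_min (abs_nonneg t) hx) (min_le_right _ _) 2⟩
  rw [abs_sub_le_iff]
  constructor <;> linarith [hle u, hle v]

end capSq

def cutoff (x x' s : ℝ) : ℝ := max 0 (min 1 ((x - s) / (x - x')))

section cutoff

variable {x x' s t : ℝ}

lemma cutoff_nonneg : 0 ≤ cutoff x x' s := le_max_left _ _

lemma cutoff_le_one : cutoff x x' s ≤ 1 := max_le zero_le_one (min_le_left _ _)

lemma cutoff_of_le (hx : x' < x) (hs : s ≤ x') : cutoff x x' s = 1 := by
  have h : 1 ≤ (x - s) / (x - x') := by rw [le_div_iff₀ (by linarith)]; linarith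
  rw [cutoff, min_eq_left h, max_eq_right zero_le_one]

lemma cutoff_of_ge (hx : x' < x) (hs : x ≤ s) : cutoff x x' s = 0 := by
  have h : (x - s) / (x - x') ≤ 0 := div_nonpos_of_nonpos_of_nonneg (by linarith) (by linarith)
  rw [cutoff, max_eq_left ((min_le_right _ _).trans h)]

lemma lt_of_cutoff_pos (hx : x' < x) (h : 0 < cutoff x x' s) : s < x := by
  by_contra! hs
  rw [cutoff_of_ge hx hs] at h
  exact h.false

lemma cutoff_anti (hx : x' < x) (hst : s ≤ t) : cutoff x x' t ≤ cutoff x x' s :=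
  max_le_max le_rfl (min_le_min le_rfl (div_le_div_of_nonneg_right (by linarith) (by linarith)))

lemma abs_cutoff_sub_le (hx : x' < x) :
    |cutoff x x' s - cutoff x x' t| ≤ 1 / (x - x') * |s - t| := by
  have h : |(x - s) / (x - x') - (x - t) / (x - x')| = 1 / (x - x') * |s - t| := by
    rw [div_sub_div_same, abs_div, abs_of_pos (sub_pos.2 hx), abs_sub_comm, sub_sub_sub_cancel_left]
    ring
  refine (abs_max_sub_max_le_max _ _ _ _).trans (max_le ?_ ?_)
  · rw [sub_self, abs_zero]; positivity
  refine (abs_min_sub_min_le_max _ _ _ _).trans (max_le ?_ h.le)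
  rw [sub_self, abs_zero]; positivity

end cutoff

def PrefixLipschitz (m : ℕ) (ψ : (ℕ → ℝ) → ℝ) : Prop :=
  ∃ K ≥ 0, ∀ y y' : ℕ → ℝ, |ψ y - ψ y'| ≤ K * ∑ i ∈ range m, |y i - y' i|

namespace PrefixLipschitz

variable {m : ℕ} {ψ φ : (ℕ → ℝ) → ℝ}

lemma congr (hψ : PrefixLipschitz m ψ) {y y' : ℕ → ℝ} (h : ∀ i < m, y i = y' i) :
    ψ y = ψ y' := by
  obtain ⟨K, -, hK⟩ := hψ
  have h0 : ∑ i ∈ range m, |y i - y' i| = 0 :=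
    sum_eq_zero fun i hi => by rw [h i (mem_range.1 hi), sub_self, abs_zero]
  simpa [h0, sub_eq_zero] using hK y y'

lemma mono (hψ : PrefixLipschitz m ψ) {m' : ℕ} (hm : m ≤ m') : PrefixLipschitz m' ψ := by
  obtain ⟨K, hK0, hK⟩ := hψ
  refine ⟨K, hK0, fun y y' => (hK y y').trans (mul_le_mul_of_nonneg_left ?_ hK0)⟩
  exact sum_le_sum_of_subset_of_nonneg (range_subset_range.2 hm) fun _ _ _ => abs_nonneg _

lemma comp (hψ : PrefixLipschitz m ψ) {f : ℝ → ℝ} {L : ℝ} (hL : 0 ≤ L)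
    (hf : ∀ s t, |f s - f t| ≤ L * |s - t|) : PrefixLipschitz m (fun y => f (ψ y)) := by
  obtain ⟨K, hK0, hK⟩ := hψ
  exact ⟨L * K, mul_nonneg hL hK0, fun y y' =>
    (hf _ _).trans (by rw [mul_assoc]; exact mul_le_mul_of_nonneg_left (hK y y') hL)⟩

lemma add (hψ : PrefixLipschitz m ψ) (hφ : PrefixLipschitz m φ) :
    PrefixLipschitz m (fun y => ψ y + φ y) := by
  obtain ⟨K, hK0, hK⟩ := hψ
  obtain ⟨L, hL0, hL⟩ := hφ
  refine ⟨K + L, add_nonneg hK0 hL0, fun y y' => ?_⟩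
  calc |ψ y + φ y - (ψ y' + φ y')| = |(ψ y - ψ y') + (φ y - φ y')| := by ring_nf
    _ ≤ |ψ y - ψ y'| + |φ y - φ y'| := abs_add_le _ _
    _ ≤ _ := by rw [add_mul]; exact add_le_add (hK y y') (hL y y')

lemma neg (hψ : PrefixLipschitz m ψ) : PrefixLipschitz m (fun y => -ψ y) :=
  hψ.comp zero_le_one fun s t => by rw [one_mul, neg_sub_neg, abs_sub_comm]

lemma mul (hψ : PrefixLipschitz m ψ) (hφ : PrefixLipschitz m φ) {A B : ℝ}
    (hψA : ∀ y, |ψ y| ≤ A) (hφB : ∀ y, |φ y| ≤ B) :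
    PrefixLipschitz m (fun y => ψ y * φ y) := by
  obtain ⟨K, hK0, hK⟩ := hψ
  obtain ⟨L, hL0, hL⟩ := hφ
  have hA : 0 ≤ A := (abs_nonneg _).trans (hψA 0)
  have hB : 0 ≤ B := (abs_nonneg _).trans (hφB 0)
  refine ⟨K * B + A * L, by positivity, fun y y' => ?_⟩
  set D := ∑ i ∈ range m, |y i - y' i|
  calc |ψ y * φ y - ψ y' * φ y'| = |(ψ y - ψ y') * φ y + ψ y' * (φ y - φ y')| := by ring_nf
    _ ≤ |ψ y - ψ y'| * |φ y| + |ψ y'| * |φ y - φ y'| := by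
        rw [← abs_mul, ← abs_mul]; exact abs_add_le _ _
    _ ≤ K * D * B + A * (L * D) := add_le_add
        (mul_le_mul (hK y y') (hφB y) (abs_nonneg _) (by positivity))
        (mul_le_mul (hψA y') (hL y y') (abs_nonneg _) hA)
    _ = (K * B + A * L) * D := by ring

lemma sum {ι : Type*} (s : Finset ι) {ψ : ι → (ℕ → ℝ) → ℝ}
    (hψ : ∀ k ∈ s, PrefixLipschitz m (ψ k)) :
    PrefixLipschitz m (fun y => ∑ k ∈ s, ψ k y) := by
  classical
  induction s using Finset.induction_on with
  | empty => exact ⟨0, le_rfl, fun y y' => by simp⟩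
  | insert k s hk ih =>
      simp only [sum_insert hk]
      exact (hψ k (mem_insert_self k s)).add (ih fun j hj => hψ j (mem_insert_of_mem hj))

end PrefixLipschitz

namespace Kolmogorov

variable (μ : ℕ → ℝ)

def partialSum (y : ℕ → ℝ) (m : ℕ) : ℝ := ∑ i ∈ range m, (y i - μ i)

def runningMax (y : ℕ → ℝ) : ℕ → ℝ
  | 0 => 0
  | m + 1 => max (runningMax y m) |partialSum μ y (m + 1)|

def cutoffIntegral (x x' : ℝ) (y : ℕ → ℝ) (m : ℕ) : ℝ :=
  ∑ k ∈ range m, cutoff x x' (runningMax μ y k) *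
    (capSq x (partialSum μ y (k + 1)) - capSq x (partialSum μ y k))

variable {μ} {x x' : ℝ} {y : ℕ → ℝ} {m : ℕ}

lemma abs_partialSum_sub_le (y y' : ℕ → ℝ) (m : ℕ) :
    |partialSum μ y m - partialSum μ y' m| ≤ ∑ i ∈ range m, |y i - y' i| := by
  rw [partialSum, partialSum, ← sum_sub_distrib]
  exact (abs_sum_le_sum_abs _ _).trans_eq (sum_congr rfl fun i _ => by ring_nf)

lemma abs_runningMax_sub_le (y y' : ℕ → ℝ) :
    ∀ m, |runningMax μ y m - runningMax μ y' m| ≤ ∑ i ∈ range m, |y i - y' i|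
  | 0 => by simp [runningMax]
  | m + 1 => by
      have h := abs_runningMax_sub_le y y' m
      rw [runningMax, runningMax, sum_range_succ]
      refine (abs_max_sub_max_le_max _ _ _ _).trans (max_le ?_ ?_)
      · linarith [abs_nonneg (y m - y' m)]
      · refine (abs_abs_sub_abs_le_abs_sub _ _).trans ?_
        simpa [sum_range_succ] using abs_partialSum_sub_le (μ := μ) y y' (m + 1)

lemma prefixLipschitz_partialSum (m : ℕ) : PrefixLipschitz m (partialSum μ · m) :=
  ⟨1, zero_le_one, fun y y' => by rw [one_mul]; exact abs_partialSum_sub_le y y' m⟩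

lemma prefixLipschitz_runningMax (m : ℕ) : PrefixLipschitz m (runningMax μ · m) :=
  ⟨1, zero_le_one, fun y y' => by rw [one_mul]; exact abs_runningMax_sub_le y y' m⟩

lemma runningMax_mono : Monotone (runningMax μ y) :=
  monotone_nat_of_le_succ fun _ => le_max_left _ _

lemma abs_partialSum_le_runningMax {j : ℕ} (hj : j ≤ m) :
    |partialSum μ y j| ≤ runningMax μ y m := by
  refine le_trans ?_ (runningMax_mono hj)
  cases j with
  | zero => simp [partialSum, runningMax]
  | succ j => exact le_max_right _ _

lemma cutoffIntegral_succ (m : ℕ) :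
    cutoffIntegral μ x x' y (m + 1) = cutoffIntegral μ x x' y m + cutoff x x' (runningMax μ y m) *
      (capSq x (partialSum μ y (m + 1)) - capSq x (partialSum μ y m)) :=
  sum_range_succ _ _

lemma prefixLipschitz_cutoffIntegral (hx : x' < x) (hx' : 0 ≤ x') (m : ℕ) :
    PrefixLipschitz m (cutoffIntegral μ x x' · m) := by
  refine PrefixLipschitz.sum _ fun k hk => ?_
  have hkm : k + 1 ≤ m := mem_range.1 hk
  have hx0 : 0 ≤ x := hx'.trans hx.le
  have hr : ∀ j ≤ m, PrefixLipschitz m (fun y => capSq x (partialSum μ y j)) := fun j hj =>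
    ((prefixLipschitz_partialSum j).comp (by positivity) fun _ _ => abs_capSq_sub_le hx0).mono hj
  refine PrefixLipschitz.mul (A := 1) (B := x ^ 2) ?_ ((hr _ hkm).add (hr k (by omega) |>.neg))
    (fun _ => by rw [abs_of_nonneg cutoff_nonneg]; exact cutoff_le_one)
    (fun _ => abs_capSq_sub_le_sq hx0)
  exact ((prefixLipschitz_runningMax k).comp (one_div_nonneg.2 (sub_nonneg.2 hx.le))
    fun _ _ => abs_cutoff_sub_le hx).mono (by omega)

lemma abs_cutoffIntegral_le (hx : 0 ≤ x) (m : ℕ) :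
    |cutoffIntegral μ x x' y m| ≤ m * x ^ 2 := by
  calc |cutoffIntegral μ x x' y m| ≤ ∑ _k ∈ range m, x ^ 2 :=
        (abs_sum_le_sum_abs _ _).trans (sum_le_sum fun k _ => ?_)
    _ = m * x ^ 2 := by simp
  rw [abs_mul, abs_of_nonneg cutoff_nonneg]
  exact (mul_le_of_le_one_left (abs_nonneg _) cutoff_le_one).trans (abs_capSq_sub_le_sq hx)

lemma convexCombination_le_cutoffIntegral_succ (hx' : 0 ≤ x') (hx : x' < x) :
    ∀ m, (1 - cutoff x x' (runningMax μ y m)) * x' ^ 2 +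
      cutoff x x' (runningMax μ y m) * capSq x (partialSum μ y (m + 1)) ≤
        cutoffIntegral μ x x' y (m + 1)
  | 0 => by
      have hr0 : capSq x (partialSum μ y 0) = 0 := by
        simp [capSq, partialSum, hx'.trans hx.le]
      simp [cutoffIntegral, runningMax, hr0, cutoff_of_le hx hx']
  | m + 1 => by
      have ih := convexCombination_le_cutoffIntegral_succ hx' hx m
      set A := cutoff x x' (runningMax μ y m)
      set B := cutoff x x' (runningMax μ y (m + 1))
      have hBA : B ≤ A := cutoff_anti hx (runningMax_mono m.le_succ)
      -- if the cutoff dropped, the running maximum grew past `x'` and equals `|T_{m+1}|`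
      have hkey : 0 ≤ (A - B) * (capSq x (partialSum μ y (m + 1)) - x' ^ 2) := by
        rcases hBA.eq_or_lt with h | h
        · simp [h]
        refine mul_nonneg (by linarith) (sub_nonneg.2 (sq_le_capSq hx' hx.le ?_))
        have hgrow : runningMax μ y m < runningMax μ y (m + 1) := by
          by_contra! hle
          exact h.ne (by simp only [A, B, le_antisymm hle (runningMax_mono m.le_succ)])
        have hx'M : x' < runningMax μ y (m + 1) := by
          by_contra! hle
          exact (h.trans_le cutoff_le_one).ne (cutoff_of_le hx hle)
        have hM : runningMax μ y (m + 1) = |partialSum μ y (m + 1)| :=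
          (max_choice _ _).resolve_left fun he => by
            rw [runningMax, he] at hgrow; exact hgrow.false
        exact hM ▸ hx'M.le
      rw [cutoffIntegral_succ]
      nlinarith

lemma cutoffIntegral_nonneg (hx' : 0 ≤ x') (hx : x' < x) :
    ∀ m, 0 ≤ cutoffIntegral μ x x' y m
  | 0 => by simp [cutoffIntegral]
  | m + 1 => by
      have h := convexCombination_le_cutoffIntegral_succ (y := y) (μ := μ) hx' hx m
      have h0 : 0 ≤ cutoff x x' (runningMax μ y m) := cutoff_nonneg
      have h1 : cutoff x x' (runningMax μ y m) ≤ 1 := cutoff_le_one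
      have hr : 0 ≤ capSq x (partialSum μ y (m + 1)) := sq_nonneg _
      nlinarith

lemma sq_le_cutoffIntegral (hx' : 0 ≤ x') (hx : x' < x) {m : ℕ} (h : x ≤ runningMax μ y m) :
    x' ^ 2 ≤ cutoffIntegral μ x x' y m := by
  cases m with
  | zero => exact absurd h (not_le.2 (hx'.trans_lt hx))
  | succ m =>
      have hG := convexCombination_le_cutoffIntegral_succ (y := y) (μ := μ) hx' hx m
      rcases le_max_iff.1 h with hM | hT
      · simpa [cutoff_of_ge hx hM] using hG
      · have h0 : 0 ≤ cutoff x x' (runningMax μ y m) := cutoff_nonneg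
        have h1 : cutoff x x' (runningMax μ y m) ≤ 1 := cutoff_le_one
        have hxx : x' ^ 2 ≤ x ^ 2 := pow_le_pow_left₀ hx' hx.le 2
        rw [capSq_of_le_abs hT] at hG
        nlinarith

end Kolmogorov

lemma ClLip.of_abs_sub_le {n : ℕ} {φ : (Fin n → ℝ) → ℝ} {K : ℝ}
    (h : ∀ v w, |φ v - φ w| ≤ K * ‖v - w‖) : ClLip φ := by
  refine ⟨|K| + 1, by positivity, 0, fun v w => (h v w).trans ?_⟩
  have : K ≤ (|K| + 1) * (1 + 1 + 1) := by linarith [le_abs_self K, abs_nonneg K]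
  simpa using mul_le_mul_of_nonneg_right this (norm_nonneg (v - w))

def prefixExtend {p : ℕ} (v : Fin p → ℝ) (w : ℝ) : ℕ → ℝ :=
  fun i => if h : i < p then v ⟨i, h⟩ else w

lemma abs_prefixExtend_sub_le {p : ℕ} (v v' : Fin p → ℝ) (w w' : ℝ) (i : ℕ) :
    |prefixExtend v w i - prefixExtend v' w' i| ≤ dist (v, w) (v', w') := by
  rw [Prod.dist_eq]
  unfold prefixExtend
  split_ifs with h
  · exact (dist_le_pi_dist v v' ⟨i, h⟩).trans (le_max_left _ _)
  · exact le_max_right _ _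

lemma PrefixLipschitz.abs_sub_prefixExtend_le {m : ℕ} {ψ : (ℕ → ℝ) → ℝ}
    (hψ : PrefixLipschitz m ψ) : ∃ K ≥ 0, ∀ {p : ℕ} (v v' : Fin p → ℝ) (w w' : ℝ),
      |ψ (prefixExtend v w) - ψ (prefixExtend v' w')| ≤ K * m * dist (v, w) (v', w') := by
  obtain ⟨K, hK0, hK⟩ := hψ
  refine ⟨K, hK0, fun v v' w w' => (hK _ _).trans ?_⟩
  rw [mul_assoc]
  refine mul_le_mul_of_nonneg_left ?_ hK0
  simpa using sum_le_sum fun i (_ : i ∈ range m) => abs_prefixExtend_sub_le v v' w w' i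

lemma PrefixLipschitz.comp_mem {m : ℕ} {ψ : (ℕ → ℝ) → ℝ} (hψ : PrefixLipschitz m ψ)
    (S : SLE Ω) {X : ℕ → Ω → ℝ} (hX : ∀ i, X i ∈ S.H) : (fun ω => ψ (fun i => X i ω)) ∈ S.H := by
  obtain ⟨K, -, hK⟩ := hψ.abs_sub_prefixExtend_le
  have hcl : ClLip (fun v : Fin m → ℝ => ψ (prefixExtend v 0)) :=
    ClLip.of_abs_sub_le fun v v' => by
      simpa [Prod.dist_eq, dist_eq_norm] using hK v v' 0 0
  convert S.comp_mem m _ hcl (fun i => X i) (fun i => hX i) using 2 with ω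
  exact hψ.congr fun i hi => by simp [prefixExtend, hi]

namespace SLE

variable (S : SLE Ω) {W Z Z' : Ω → ℝ}

lemma comp_mem_of_abs_sub_le (hW : W ∈ S.H) {f : ℝ → ℝ} {L : ℝ} (hL : 0 ≤ L)
    (hf : ∀ s t, |f s - f t| ≤ L * |s - t|) : (fun ω => f (W ω)) ∈ S.H := by
  have hψ : PrefixLipschitz 1 (fun y => f (y 0)) := ⟨L, hL, fun y y' => by simpa using hf _ _⟩
  exact hψ.comp_mem S (X := fun _ => W) fun _ => hW

lemma quadratic_comp_mem (hW : W ∈ S.H) (α β γ : ℝ) :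
    (fun ω => α * W ω ^ 2 + β * W ω + γ) ∈ S.H := by
  have hcl : ClLip (fun v : Fin 1 → ℝ => α * v 0 ^ 2 + β * v 0 + γ) := by
    refine ⟨|α| + |β| + 1, by positivity, 1, fun v w => ?_⟩
    have hv : |v 0| ≤ ‖v‖ := norm_le_pi_norm v 0
    have hw : |w 0| ≤ ‖w‖ := norm_le_pi_norm w 0
    have hvw : |v 0 - w 0| ≤ ‖v - w‖ := norm_le_pi_norm (v - w) 0
    have hfac : |α * (v 0 + w 0) + β| ≤ (|α| + |β| + 1) * (1 + ‖v‖ ^ 1 + ‖w‖ ^ 1) := by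
      calc |α * (v 0 + w 0) + β| ≤ |α| * (|v 0| + |w 0|) + |β| := by
            refine (abs_add_le _ _).trans (add_le_add_left ?_ _)
            rw [abs_mul]; exact mul_le_mul_of_nonneg_left (abs_add_le _ _) (abs_nonneg α)
        _ ≤ _ := by
            simp only [pow_one]
            nlinarith [abs_nonneg α, abs_nonneg β, norm_nonneg v, norm_nonneg w,
              mul_le_mul_of_nonneg_left (add_le_add hv hw) (abs_nonneg α)]
    calc |α * v 0 ^ 2 + β * v 0 + γ - (α * w 0 ^ 2 + β * w 0 + γ)|
        = |α * (v 0 + w 0) + β| * |v 0 - w 0| := by rw [← abs_mul]; ring_nf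
      _ ≤ _ := mul_le_mul hfac hvw (abs_nonneg _) (by positivity)
  simpa using S.comp_mem 1 _ hcl (fun _ => W) fun _ => hW

lemma neg_mem (hZ : Z ∈ S.H) : (fun ω => -Z ω) ∈ S.H := by
  simpa using S.quadratic_comp_mem hZ 0 (-1) 0

lemma add_const_mem (hZ : Z ∈ S.H) (c : ℝ) : (fun ω => Z ω + c) ∈ S.H := by
  simpa using S.quadratic_comp_mem hZ 0 1 c

lemma const_mul_mem (hZ : Z ∈ S.H) (c : ℝ) : (fun ω => c * Z ω) ∈ S.H := by
  simpa using S.quadratic_comp_mem hZ 0 c 0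

lemma sq_mem (hZ : Z ∈ S.H) : (fun ω => Z ω ^ 2) ∈ S.H := by
  simpa using S.quadratic_comp_mem hZ 1 0 0

lemma E_add_const (hZ : Z ∈ S.H) (c : ℝ) : S.E (fun ω => Z ω + c) = S.E Z + c := by
  have h1 := S.subadd Z _ hZ (S.const_mem c)
  have h2 := S.subadd _ _ (S.add_const_mem hZ c) (S.const_mem (-c))
  simp only [S.isConst, add_neg_cancel_right] at h1 h2
  linarith

lemma E_le_E_add (hZ : Z ∈ S.H) (hZ' : Z' ∈ S.H) {d : ℝ} (h : ∀ ω, Z ω ≤ Z' ω + d) :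
    S.E Z ≤ S.E Z' + d :=
  (S.mono _ _ hZ (S.add_const_mem hZ' d) h).trans_eq (S.E_add_const hZ' d)

lemma abs_E_sub_E_le (hZ : Z ∈ S.H) (hZ' : Z' ∈ S.H) {d : ℝ} (h : ∀ ω, |Z ω - Z' ω| ≤ d) :
    |S.E Z - S.E Z'| ≤ d := by
  have h1 := S.E_le_E_add hZ hZ' fun ω => by linarith [(abs_le.1 (h ω)).2]
  have h2 := S.E_le_E_add hZ' hZ fun ω => by linarith [(abs_le.1 (h ω)).1]
  exact abs_sub_le_iff.2 ⟨by linarith, by linarith⟩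

lemma E_sq_nonneg (hZ : Z ∈ S.H) : 0 ≤ S.E (fun ω => Z ω ^ 2) := by
  simpa [S.isConst] using S.mono _ _ (S.const_mem 0) (S.sq_mem hZ) fun ω => sq_nonneg (Z ω)

lemma mul_le_E_mul (hW : W ∈ S.H) {μ : ℝ} (h1 : S.eps W ≤ μ) (h2 : μ ≤ S.E W) (c : ℝ) :
    c * μ ≤ S.E (fun ω => c * W ω) := by
  rcases lt_trichotomy c 0 with hc | rfl | hc
  · have h := S.poshom (-c) (neg_pos.2 hc) _ (S.neg_mem hW)
    simp only [neg_mul_neg] at h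
    rw [h]
    unfold SLE.eps at h1
    nlinarith
  · simp [S.isConst]
  · rw [S.poshom c hc W hW]
    exact mul_le_mul_of_nonneg_left h2 hc.le

/-- Expand `-(t - μ + W)²`: subadditivity splits off `E[W²]`, and `E[-2(t - μ) W] ≥ -2(t - μ) μ`
whatever the sign of `t - μ`. -/
lemma neg_sq_sub_E_sq_le (hW : W ∈ S.H) {μ : ℝ} (h1 : S.eps W ≤ μ) (h2 : μ ≤ S.E W) (t : ℝ) :
    -t ^ 2 - S.E (fun ω => W ω ^ 2) ≤ S.E (fun ω => -(t + W ω - μ) ^ 2) := by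
  set a := t - μ
  have hmix := S.quadratic_comp_mem hW (-1) (-(2 * a)) 0
  have hsub := S.subadd _ _ hmix (S.sq_mem hW)
  have hlin := S.mul_le_E_mul hW h1 h2 (-(2 * a))
  have hexp : (fun ω => -(t + W ω - μ) ^ 2) =
      fun ω => (-1 * W ω ^ 2 + -(2 * a) * W ω + 0) + -a ^ 2 := by
    funext ω; ring
  rw [hexp, S.E_add_const hmix]
  have hsum : (fun ω => (-1 * W ω ^ 2 + -(2 * a) * W ω + 0) + W ω ^ 2) =
      fun ω => -(2 * a) * W ω := by
    funext ω; ring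
  rw [hsum] at hsub
  nlinarith [sq_nonneg μ]

end SLE

namespace Kolmogorov

variable (S : SLE Ω) {W : Ω → ℝ} {x μ₀ : ℝ}

/-- The inner expectation of the independence step: the expected change of `-G` when the
partial sum `t` moves by `W - μ₀` while the cutoff has the value `a`. -/
def condIncrement (W : Ω → ℝ) (x μ₀ t a : ℝ) : ℝ :=
  S.E (fun ω => -(a * (capSq x (t + W ω - μ₀) - capSq x t)))

lemma abs_capSq_shift_sub_le (hx : 0 ≤ x) (t s s' : ℝ) :
    |capSq x (t + s - μ₀) - capSq x (t + s' - μ₀)| ≤ 2 * x * |s - s'| := by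
  simpa using abs_capSq_sub_le (u := t + s - μ₀) (v := t + s' - μ₀) hx

lemma condIncrement_integrand_mem (hW : W ∈ S.H) (hx : 0 ≤ x) (t a : ℝ) :
    (fun ω => -(a * (capSq x (t + W ω - μ₀) - capSq x t))) ∈ S.H := by
  refine S.comp_mem_of_abs_sub_le hW (f := fun s => -(a * (capSq x (t + s - μ₀) - capSq x t)))
    (L := |a| * (2 * x)) (by positivity) fun s s' => ?_
  have h := abs_capSq_shift_sub_le (μ₀ := μ₀) hx t s s'
  calc |-(a * (capSq x (t + s - μ₀) - capSq x t)) - -(a * (capSq x (t + s' - μ₀) - capSq x t))|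
      = |a| * |capSq x (t + s - μ₀) - capSq x (t + s' - μ₀)| := by
        rw [← abs_mul, ← abs_neg]; congr 1; ring
    _ ≤ |a| * (2 * x) * |s - s'| := by
      rw [mul_assoc]; exact mul_le_mul_of_nonneg_left h (abs_nonneg a)

lemma neg_E_sq_le_condIncrement (hW : W ∈ S.H) (h1 : S.eps W ≤ μ₀) (h2 : μ₀ ≤ S.E W) {t a : ℝ}
    (ha0 : 0 ≤ a) (ha1 : a ≤ 1) (hta : 0 < a → |t| ≤ x) :
    -S.E (fun ω => W ω ^ 2) ≤ condIncrement S W x μ₀ t a := by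
  have hσ := S.E_sq_nonneg hW
  rcases ha0.eq_or_lt with rfl | ha
  · simpa [condIncrement, S.isConst] using hσ
  have htx := hta ha
  have hx : 0 ≤ x := (abs_nonneg t).trans htx
  have hsq : (fun ω => -(t + W ω - μ₀) ^ 2) ∈ S.H := by
    convert S.quadratic_comp_mem hW (-1) (-(2 * (t - μ₀))) (-(t - μ₀) ^ 2) using 2; ring
  have hcap : (fun ω => -capSq x (t + W ω - μ₀)) ∈ S.H := by
    refine S.comp_mem_of_abs_sub_le hW (f := fun s => -capSq x (t + s - μ₀)) (L := 2 * x)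
      (by positivity) fun s s' => ?_
    rw [neg_sub_neg, abs_sub_comm s s']
    exact abs_capSq_shift_sub_le hx t s' s
  have hmono : S.E (fun ω => -(t + W ω - μ₀) ^ 2) ≤ S.E (fun ω => -capSq x (t + W ω - μ₀)) :=
    S.mono _ _ hsq hcap fun ω => neg_le_neg (capSq_le_sq hx)
  have hcore := S.neg_sq_sub_E_sq_le hW h1 h2 t
  have hscale : condIncrement S W x μ₀ t a =
      a * (S.E (fun ω => -capSq x (t + W ω - μ₀)) + t ^ 2) := by
    rw [condIncrement, ← capSq_of_abs_le htx, ← S.E_add_const hcap,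
      ← S.poshom a ha _ (S.add_const_mem hcap _)]
    congr 1; funext ω; ring
  rw [hscale]
  nlinarith

lemma abs_condIncrement_sub_le (hW : W ∈ S.H) (hx : 0 ≤ x) (t t' : ℝ) {a a' : ℝ}
    (ha' : |a'| ≤ 1) :
    |condIncrement S W x μ₀ t a - condIncrement S W x μ₀ t' a'| ≤
      x ^ 2 * |a - a'| + 4 * x * |t - t'| := by
  refine S.abs_E_sub_E_le (condIncrement_integrand_mem S hW hx t a)
    (condIncrement_integrand_mem S hW hx t' a') fun ω => ?_
  set R := capSq x (t + W ω - μ₀) - capSq x t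
  set R' := capSq x (t' + W ω - μ₀) - capSq x t'
  have hR : |R| ≤ x ^ 2 := abs_capSq_sub_le_sq hx
  have hRR' : |R - R'| ≤ 4 * x * |t - t'| := by
    have h1 := abs_capSq_sub_le (u := t + W ω - μ₀) (v := t' + W ω - μ₀) hx
    have h2 := abs_capSq_sub_le (u := t) (v := t') hx
    rw [show t + W ω - μ₀ - (t' + W ω - μ₀) = t - t' by ring] at h1
    calc |R - R'| ≤ |capSq x (t + W ω - μ₀) - capSq x (t' + W ω - μ₀)| +
          |capSq x t - capSq x t'| := by
          rw [show R - R' = (capSq x (t + W ω - μ₀) - capSq x (t' + W ω - μ₀)) -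
            (capSq x t - capSq x t') by ring]
          exact abs_sub _ _
      _ ≤ 4 * x * |t - t'| := by linarith
  calc |-(a * R) - -(a' * R')| = |(a - a') * R + a' * (R - R')| := by
        rw [← abs_neg]; congr 1; ring
    _ ≤ |a - a'| * |R| + |a'| * |R - R'| := by
        rw [← abs_mul, ← abs_mul]; exact abs_add_le _ _
    _ ≤ |a - a'| * x ^ 2 + 1 * (4 * x * |t - t'|) :=
        add_le_add (mul_le_mul_of_nonneg_left hR (abs_nonneg _))
          (mul_le_mul ha' hRR' (abs_nonneg _) zero_le_one)
    _ = x ^ 2 * |a - a'| + 4 * x * |t - t'| := by ring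

lemma prefixLipschitz_condIncrement (hW : W ∈ S.H) {x' : ℝ} (hx' : 0 ≤ x') (hx : x' < x)
    (μ : ℕ → ℝ) (m : ℕ) :
    PrefixLipschitz m (fun y => condIncrement S W x μ₀ (partialSum μ y m)
      (cutoff x x' (runningMax μ y m))) := by
  have hx0 : 0 ≤ x := hx'.trans hx.le
  have hxx' : 0 < x - x' := sub_pos.2 hx
  refine ⟨x ^ 2 * (1 / (x - x')) + 4 * x, by positivity, fun y y' => ?_⟩
  have hθ : |cutoff x x' (runningMax μ y' m)| ≤ 1 := by
    rw [abs_of_nonneg cutoff_nonneg]; exact cutoff_le_one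
  have hM := (abs_cutoff_sub_le hx).trans
    (mul_le_mul_of_nonneg_left (abs_runningMax_sub_le (μ := μ) y y' m) (by positivity))
  refine (abs_condIncrement_sub_le S hW hx0 _ _ hθ).trans ?_
  have hT := abs_partialSum_sub_le (μ := μ) y y' m
  nlinarith [sq_nonneg x]

end Kolmogorov

lemma prefixExtend_eq_update (y : ℕ → ℝ) (p : ℕ) (w : ℝ) {j : ℕ} (hj : j < p + 1) :
    prefixExtend (fun k : Fin p => y k) w j = Function.update y p w j := by
  unfold prefixExtend
  split_ifs with h
  · rw [Function.update_of_ne h.ne]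
  · rw [show j = p by omega, Function.update_self]

lemma IndepSeq.E_eq_E_E_update {S : SLE Ω} {X : ℕ → Ω → ℝ} (hind : IndepSeq S X) {m : ℕ}
    {ψ : (ℕ → ℝ) → ℝ} (hψ : PrefixLipschitz (m + 1) ψ) (hb : ∃ M, ∀ y, |ψ y| ≤ M) :
    S.E (fun ω => ψ (fun i => X i ω)) =
      S.E (fun ω => S.E (fun ω' => ψ (Function.update (fun i => X i ω) m (X m ω')))) := by
  cases m with
  | zero =>
      have h : ∀ ω ω', ψ (Function.update (fun i => X i ω) 0 (X 0 ω')) = ψ (fun i => X i ω') :=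
        fun ω ω' => hψ.congr fun i hi => by
          rw [show i = 0 by omega, Function.update_self]
      simp only [h, S.isConst]
  | succ p =>
      obtain ⟨K, hK0, hK⟩ := hψ.abs_sub_prefixExtend_le
      obtain ⟨M, hM⟩ := hb
      have hlip : LipschitzWith (K * ((p + 1 + 1 : ℕ) : ℝ)).toNNReal
          (Function.uncurry fun (v : Fin (p + 1) → ℝ) (w : Fin 1 → ℝ) =>
            ψ (prefixExtend v (w 0))) := by
        refine LipschitzWith.of_dist_le_mul fun ⟨v, w⟩ ⟨v', w'⟩ => ?_
        rw [Real.coe_toNNReal _ (by positivity), Real.dist_eq]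
        refine (hK v v' (w 0) (w' 0)).trans (mul_le_mul_of_nonneg_left ?_ (by positivity))
        simp only [Prod.dist_eq]
        exact max_le_max le_rfl (dist_le_pi_dist w w' 0)
      have h := hind p _ ⟨_, hlip⟩ ⟨M, fun _ _ => hM _⟩
      beta_reduce at h
      refine (congrArg S.E (funext fun ω => ?_)).trans
        (h.trans (congrArg S.E (funext fun ω => congrArg S.E (funext fun ω' => ?_))))
      · refine hψ.congr fun j hj => ?_
        rw [prefixExtend_eq_update (fun i => X i ω) _ _ hj, Function.update_eq_self]
      · exact hψ.congr fun j hj => prefixExtend_eq_update (fun i => X i ω) _ _ hj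

namespace Kolmogorov

variable {μ : ℕ → ℝ} {x x' : ℝ}

lemma neg_cutoffIntegral_succ_update (hx' : 0 ≤ x') (hx : x' < x) (y : ℕ → ℝ) (m : ℕ) (w : ℝ) :
    -cutoffIntegral μ x x' (Function.update y m w) (m + 1) =
      -(cutoff x x' (runningMax μ y m) *
        (capSq x (partialSum μ y m + w - μ m) - capSq x (partialSum μ y m))) +
      -cutoffIntegral μ x x' y m := by
  have hagree : ∀ i < m, Function.update y m w i = y i := fun i hi =>
    Function.update_of_ne hi.ne _ _
  have hT : partialSum μ (Function.update y m w) (m + 1) = partialSum μ y m + w - μ m := by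
    rw [partialSum, sum_range_succ, Function.update_self, ← partialSum,
      (prefixLipschitz_partialSum m).congr hagree]
    ring
  rw [cutoffIntegral_succ, hT, (prefixLipschitz_partialSum m).congr hagree,
    (prefixLipschitz_runningMax m).congr hagree,
    (prefixLipschitz_cutoffIntegral hx hx' m).congr hagree]
  ring

variable {S : SLE Ω} {X : ℕ → Ω → ℝ}

lemma E_neg_cutoffIntegral_succ (hH : ∀ i, X i ∈ S.H) (hind : IndepSeq S X) (hx' : 0 ≤ x')
    (hx : x' < x) (m : ℕ) :
    S.E (fun ω => -cutoffIntegral μ x x' (fun i => X i ω) (m + 1)) =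
      S.E (fun ω => condIncrement S (X m) x (μ m) (partialSum μ (fun i => X i ω) m)
          (cutoff x x' (runningMax μ (fun i => X i ω) m)) +
        -cutoffIntegral μ x x' (fun i => X i ω) m) := by
  have hx0 : 0 ≤ x := hx'.trans hx.le
  have hbdd : ∃ M, ∀ y, |-cutoffIntegral μ x x' y (m + 1)| ≤ M :=
    ⟨_, fun y => (abs_neg _).trans_le (abs_cutoffIntegral_le hx0 _)⟩
  rw [hind.E_eq_E_E_update (prefixLipschitz_cutoffIntegral hx hx' (m + 1)).neg hbdd]
  congr 1
  funext ω
  simp only [neg_cutoffIntegral_succ_update hx' hx]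
  exact S.E_add_const (condIncrement_integrand_mem S (hH m) hx0 _ _) _

lemma E_neg_cutoffIntegral_sub_le (hH : ∀ i, X i ∈ S.H) (hind : IndepSeq S X)
    (hμ : ∀ k, S.eps (X k) ≤ μ k ∧ μ k ≤ S.E (X k)) (hx' : 0 ≤ x') (hx : x' < x) (m : ℕ) :
    S.E (fun ω => -cutoffIntegral μ x x' (fun i => X i ω) m) - S.E (fun ω => X m ω ^ 2) ≤
      S.E (fun ω => -cutoffIntegral μ x x' (fun i => X i ω) (m + 1)) := by
  have hG := (prefixLipschitz_cutoffIntegral (μ := μ) hx hx' m).neg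
  rw [E_neg_cutoffIntegral_succ hH hind hx' hx, sub_le_iff_le_add]
  refine S.E_le_E_add (hG.comp_mem S hH)
    (((prefixLipschitz_condIncrement S (hH m) hx' hx μ m).add hG).comp_mem S hH) fun ω => ?_
  have hθ := neg_E_sq_le_condIncrement S (x := x) (hH m) (hμ m).1 (hμ m).2
    (t := partialSum μ (fun i => X i ω) m) cutoff_nonneg cutoff_le_one fun hpos =>
      (abs_partialSum_le_runningMax le_rfl).trans (lt_of_cutoff_pos hx hpos).le
  linarith

lemma neg_sum_le_E_neg_cutoffIntegral (hH : ∀ i, X i ∈ S.H) (hind : IndepSeq S X)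
    (hμ : ∀ k, S.eps (X k) ≤ μ k ∧ μ k ≤ S.E (X k)) (hx' : 0 ≤ x') (hx : x' < x) :
    ∀ m, -∑ i ∈ range m, S.E (fun ω => X i ω ^ 2) ≤
      S.E (fun ω => -cutoffIntegral μ x x' (fun i => X i ω) m)
  | 0 => by simp [cutoffIntegral, S.isConst]
  | m + 1 => by
      have ih := neg_sum_le_E_neg_cutoffIntegral hH hind hμ hx' hx m
      have hstep := E_neg_cutoffIntegral_sub_le hH hind hμ hx' hx m
      rw [sum_range_succ]
      linarith

lemma one_sub_V_compl_le (V : Set Ω → ℝ)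
    (hV : ∀ (A : Set Ω) (f : Ω → ℝ), f ∈ S.H →
      (∀ ω, f ω ≤ Set.indicator A (fun _ => (1 : ℝ)) ω) → S.E f ≤ V A)
    (hH : ∀ i, X i ∈ S.H) (hind : IndepSeq S X)
    (hμ : ∀ k, S.eps (X k) ≤ μ k ∧ μ k ≤ S.E (X k)) (n : ℕ) (hx' : 0 < x') (hx : x' < x) :
    1 - V {ω | ∃ k < n, x ≤ |∑ i ∈ range (k + 1), (X i ω - μ i)|}ᶜ ≤
      (x' ^ 2)⁻¹ * ∑ i ∈ range n, S.E (fun ω => X i ω ^ 2) := by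
  set G := fun ω => cutoffIntegral μ x x' (fun i => X i ω) n
  have hc : 0 < (x' ^ 2)⁻¹ := by positivity
  have hG : (fun ω => -G ω) ∈ S.H :=
    (prefixLipschitz_cutoffIntegral hx hx'.le n).neg.comp_mem S hH
  have hle : ∀ ω, (x' ^ 2)⁻¹ * -G ω + 1 ≤
      Set.indicator {ω | ∃ k < n, x ≤ |∑ i ∈ range (k + 1), (X i ω - μ i)|}ᶜ (fun _ => 1) ω := by
    intro ω
    by_cases hω : ω ∈ {ω | ∃ k < n, x ≤ |∑ i ∈ range (k + 1), (X i ω - μ i)|}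
    · obtain ⟨k, hk, hxk⟩ := id hω
      have hM : x ≤ runningMax μ (fun i => X i ω) n :=
        hxk.trans (abs_partialSum_le_runningMax (by omega))
      have hGx := sq_le_cutoffIntegral hx'.le hx hM
      rw [Set.indicator_of_notMem (Set.notMem_compl_iff.2 hω)]
      have : 1 ≤ (x' ^ 2)⁻¹ * G ω := by
        rw [← inv_mul_cancel₀ (pow_pos hx' 2).ne']
        exact mul_le_mul_of_nonneg_left hGx hc.le
      linarith
    · rw [Set.indicator_of_mem (Set.mem_compl hω)]
      have := cutoffIntegral_nonneg (μ := μ) (y := fun i => X i ω) hx'.le hx n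
      nlinarith
  have hE := hV _ _ (S.add_const_mem (S.const_mul_mem hG _) 1) hle
  rw [S.E_add_const (S.const_mul_mem hG _), S.poshom _ hc _ hG] at hE
  have hsum := neg_sum_le_E_neg_cutoffIntegral hH hind hμ hx'.le hx n
  nlinarith

end Kolmogorov

theorem maximal_inequality_lower_general (S : SLE Ω) (V : Set Ω → ℝ)
    (hsandwich : ∀ (A : Set Ω) (f g : Ω → ℝ), f ∈ S.H → g ∈ S.H →
      (∀ ω, f ω ≤ Set.indicator A (fun _ => (1 : ℝ)) ω) →
      (∀ ω, Set.indicator A (fun _ => (1 : ℝ)) ω ≤ g ω) →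
      S.E f ≤ V A ∧ V A ≤ S.E g)
    (X : ℕ → Ω → ℝ) (hH : ∀ i, X i ∈ S.H) (hind : IndepSeq S X)
    (n : ℕ) (μ : ℕ → ℝ) (hμ : ∀ k, S.eps (X k) ≤ μ k ∧ μ k ≤ S.E (X k)) :
    ∀ x : ℝ, 0 < x →
      1 - V {ω | ∃ k < n,
          x ≤ |∑ i ∈ Finset.range (k + 1), (X i ω - μ i)|}ᶜ ≤
        2 / x ^ 2 * ∑ i ∈ Finset.range n, S.E (fun ω => (X i ω) ^ 2) := by
  intro x hx
  have hV : ∀ (A : Set Ω) (f : Ω → ℝ), f ∈ S.H →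
      (∀ ω, f ω ≤ Set.indicator A (fun _ => (1 : ℝ)) ω) → S.E f ≤ V A :=
    fun A f hf hfA => (hsandwich A f _ hf (S.const_mem 1) hfA
      fun ω => Set.indicator_le_self' (fun _ _ => zero_le_one) ω).1
  -- the bound with `x' < x` has the constant `1 / x'²`; take `x'² = x² / 2`
  have hsq : (x / √2) ^ 2 = x ^ 2 / 2 := by rw [div_pow, Real.sq_sqrt zero_le_two]
  have h := Kolmogorov.one_sub_V_compl_le V hV hH hind hμ n (x' := x / √2) (by positivity)
    (div_lt_self hx Real.one_lt_sqrt_two)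
  rwa [hsq, inv_div] at h

/-- Kolmogorov-type maximal inequality under the lower capacity (Lemma 2.7). -/
theorem maximal_inequality_lower (S : SLE Ω) (V : Set Ω → ℝ)
    (hsandwich : ∀ (A : Set Ω) (f g : Ω → ℝ), f ∈ S.H → g ∈ S.H →
      (∀ ω, f ω ≤ Set.indicator A (fun _ => (1 : ℝ)) ω) →
      (∀ ω, Set.indicator A (fun _ => (1 : ℝ)) ω ≤ g ω) →
      S.E f ≤ V A ∧ V A ≤ S.E g)
    (hVmono : ∀ A B : Set Ω, A ⊆ B → V A ≤ V B)
    (hVsub : ∀ A B : Set Ω, V (A ∪ B) ≤ V A + V B)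
    (X : ℕ → Ω → ℝ) (hH : ∀ i, X i ∈ S.H) (hind : IndepSeq S X)
    (n : ℕ) (μ : ℕ → ℝ) (hμ : ∀ k, S.eps (X k) ≤ μ k ∧ μ k ≤ S.E (X k)) :
    ∀ x : ℝ, 0 < x →
      1 - V {ω | ∃ k < n,
          x ≤ |∑ i ∈ Finset.range (k + 1), (X i ω - μ i)|}ᶜ ≤
        2 / x ^ 2 * ∑ i ∈ Finset.range n, S.E (fun ω => (X i ω) ^ 2) :=
  maximal_inequality_lower_general S V hsandwich X hH hind n μ hμ

end
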